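/- Let L > 0 and θ : [0,L] → [0,π] be Lipschitz with θ(0) = 0, θ(L) = π, ∫₀ᴸ cos θ(t) dt = 0, and ∫₀ˢ cos θ(t) dt > 0 for all s ∈ (0,L). Let θ* be the non-decreasing rearrangement of θ. Then θ* also satisfies: θ*(0) = 0, θ*(L) = π, ∫₀ᴸ cos θ*(t) dt = 0, ∫₀ᴸ sin θ*(t) dt > 0, and ∫₀ˢ cos θ*(t) dt > 0 for all s ∈ (0,L). -/

import Mathlib

open Real Set intervalIntegral MeasureTheory

/-- The non-decreasing rearrangement of a function `u` on the interval `[0, L]`. -/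
noncomputable def ndRearr (L : ℝ) (u : ℝ → ℝ) (s : ℝ) : ℝ :=
  sInf {c : ℝ | 0 ≤ c ∧
    (MeasureTheory.volume {t : ℝ | t ∈ Set.Icc 0 L ∧ c ≤ u t}).toReal ≤ L - s}

/-!
The rearrangement `θ* = ndRearr L θ` is equimeasurable with `θ`: `{θ* > c}` is an interval of
the same length as `{θ > c}`, so `θ` and `θ*` push Lebesgue measure on `[0, L]` forward to the
same measure and `∫ f ∘ θ* = ∫ f ∘ θ` for every continuous `f`. This transfers `∫ cos θ = 0`
and `∫ sin θ > 0`. Since `θ*` is non-decreasing with values in `[0, π]`, `cos θ*` is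
non-increasing; a non-increasing function with zero total integral has positive partial
integrals unless it vanishes a.e., which is excluded by `∫ |cos θ*| = ∫ |cos θ| > 0`.
-/

open Filter Topology

theorem MeasureTheory.Measure.ext_of_Ioi {α : Type*} [TopologicalSpace α]
    {_ : MeasurableSpace α} [SecondCountableTopology α] [LinearOrder α] [OrderTopology α]
    [BorelSpace α] {μ ν : Measure α} [IsFiniteMeasure μ]
    (huniv : μ univ = ν univ) (h : ∀ a, μ (Ioi a) = ν (Ioi a)) : μ = ν := by
  have : IsFiniteMeasure ν := ⟨huniv ▸ measure_lt_top μ univ⟩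
  refine Measure.ext_of_Iic μ ν fun a => ?_
  rw [← compl_Ioi, measure_compl measurableSet_Ioi (measure_ne_top _ _),
    measure_compl measurableSet_Ioi (measure_ne_top _ _), huniv, h]

theorem exists_lt_toReal_measure_le_iff {α : Type*} [MeasurableSpace α] {μ : Measure α}
    {A : Set α} (hA : μ A ≠ ⊤) (f : α → ℝ) {c x : ℝ} (hx : 0 ≤ x) :
    (∃ c' > c, x < (μ {t ∈ A | c' ≤ f t}).toReal) ↔ x < (μ {t ∈ A | c < f t}).toReal := by
  have hfin : ∀ p : α → Prop, μ {t ∈ A | p t} ≠ ⊤ := fun p =>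
    measure_ne_top_of_subset (sep_subset A p) hA
  constructor
  · rintro ⟨c', hcc', hlt⟩
    refine hlt.trans_le (ENNReal.toReal_mono (hfin _) (measure_mono fun t ht => ?_))
    exact ⟨ht.1, hcc'.trans_le ht.2⟩
  · intro hlt
    have hunion : {t ∈ A | c < f t} = ⋃ k : ℕ, {t ∈ A | c + 1 / (k + 1) ≤ f t} := by
      ext t
      simp only [mem_ofPred_eq, mem_iUnion]
      refine ⟨fun ⟨htA, hct⟩ => ?_, fun ⟨k, htA, hkt⟩ => ⟨htA, ?_⟩⟩
      · obtain ⟨k, hk⟩ := exists_nat_one_div_lt (sub_pos.2 hct)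
        exact ⟨k, htA, by linarith⟩
      · have : (0 : ℝ) < 1 / (k + 1) := by positivity
        linarith
    have hmono : Monotone fun k : ℕ => {t ∈ A | c + 1 / (k + 1) ≤ f t} := by
      intro k l hkl t ⟨htA, hkt⟩
      refine ⟨htA, le_trans ?_ hkt⟩
      gcongr
    rw [← ENNReal.ofReal_lt_iff_lt_toReal hx (hfin _), hunion, hmono.measure_iUnion,
      lt_iSup_iff] at hlt
    obtain ⟨k, hk⟩ := hlt
    exact ⟨c + 1 / (k + 1), lt_add_of_pos_right c (by positivity),
      (ENNReal.ofReal_lt_iff_lt_toReal hx (hfin _)).1 hk⟩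

theorem volume_sep_Icc_pos {a b c : ℝ} {f : ℝ → ℝ} (hab : a < b)
    (hf : ContinuousWithinAt f (Icc a b) b) (hc : c < f b) :
    0 < volume {t ∈ Icc a b | c < f t} := by
  have hnhds : {t ∈ Icc a b | c < f t} ∈ 𝓝[≤] b := by
    rw [← nhdsWithin_Icc_eq_nhdsLE hab]
    exact inter_mem self_mem_nhdsWithin (hf.eventually (lt_mem_nhds hc))
  obtain ⟨l, hl, hsub⟩ := mem_nhdsLE_iff_exists_Ioc_subset.1 hnhds
  exact ((Measure.measure_Ioo_pos _).2 hl).trans_le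
    (measure_mono (Ioo_subset_Ioc_self.trans hsub))

section Rearrangement

variable {L M : ℝ} {θ : ℝ → ℝ}

theorem toReal_volume_sep_Icc_le (hL : 0 ≤ L) (p : ℝ → Prop) :
    (volume {t ∈ Icc 0 L | p t}).toReal ≤ L :=
  ENNReal.toReal_le_of_le_ofReal hL <| by
    simpa only [Real.volume_Icc, sub_zero] using
      measure_mono (μ := volume) (sep_subset (Icc 0 L) p)

theorem ndRearr_nonneg (s : ℝ) : 0 ≤ ndRearr L θ s :=
  Real.sInf_nonneg fun _ hc => hc.1

theorem ndRearr_zero (hL : 0 ≤ L) : ndRearr L θ 0 = 0 :=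
  le_antisymm (csInf_le ⟨0, fun _ hc => hc.1⟩ ⟨le_rfl, by
    simpa only [sub_zero] using toReal_volume_sep_Icc_le hL _⟩) (ndRearr_nonneg 0)

theorem lt_ndRearr_iff (hθ : MapsTo θ (Icc 0 L) (Icc 0 M)) {s c : ℝ} (hs : s ≤ L) (hc : 0 ≤ c) :
    c < ndRearr L θ s ↔ L - s < (volume {t ∈ Icc 0 L | c < θ t}).toReal := by
  set S := {b : ℝ | 0 ≤ b ∧ (volume {t ∈ Icc 0 L | b ≤ θ t}).toReal ≤ L - s}
  have hS : S.Nonempty := by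
    refine ⟨max M 0 + 1, by positivity, ?_⟩
    have : {t ∈ Icc 0 L | max M 0 + 1 ≤ θ t} = ∅ :=
      eq_empty_of_forall_notMem fun t ⟨ht, hle⟩ => by
        linarith [(hθ ht).2, le_max_left M 0]
    simpa only [this, measure_empty, ENNReal.toReal_zero, sub_nonneg] using hs
  have hfin : volume (Icc (0 : ℝ) L) ≠ ⊤ := measure_Icc_lt_top.ne
  have hup : ∀ {b b'}, b ∈ S → b ≤ b' → b' ∈ S := fun hb hbb' =>
    ⟨hb.1.trans hbb', le_trans (ENNReal.toReal_mono (measure_ne_top_of_subset (sep_subset _ _)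
      hfin) (measure_mono fun t ht => ⟨ht.1, hbb'.trans ht.2⟩)) hb.2⟩
  rw [← exists_lt_toReal_measure_le_iff hfin θ (sub_nonneg.2 hs)]
  constructor
  · intro hlt
    refine ⟨(c + ndRearr L θ s) / 2, by linarith, not_le.1 fun hle => ?_⟩
    have : ndRearr L θ s ≤ (c + ndRearr L θ s) / 2 :=
      csInf_le ⟨0, fun _ hb => hb.1⟩ ⟨by linarith, hle⟩
    linarith
  · rintro ⟨c', hcc', hlt⟩
    refine hcc'.trans_le (le_csInf hS fun b hb => le_of_not_gt fun hbc' => ?_)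
    exact hlt.not_ge (hup hb hbc'.le).2

theorem ndRearr_le (hL : 0 ≤ L) (hθ : MapsTo θ (Icc 0 L) (Icc 0 M)) {s : ℝ} (hs : s ≤ L) :
    ndRearr L θ s ≤ M := by
  refine le_of_not_gt fun hlt => ?_
  have hM : 0 ≤ M := (hθ (left_mem_Icc.2 hL)).1.trans (hθ (left_mem_Icc.2 hL)).2
  have hempty : {t ∈ Icc 0 L | M < θ t} = ∅ :=
    eq_empty_of_forall_notMem fun t ⟨ht, hlt⟩ => (hθ ht).2.not_gt hlt
  have := (lt_ndRearr_iff hθ hs hM).1 hlt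
  rw [hempty, measure_empty, ENNReal.toReal_zero] at this
  linarith

theorem monotoneOn_ndRearr (hθ : MapsTo θ (Icc 0 L) (Icc 0 M)) :
    MonotoneOn (ndRearr L θ) (Iic L) := by
  intro s₁ _ s₂ hs₂ hs
  refine le_of_forall_lt fun c hc => ?_
  rcases lt_or_ge c 0 with hc0 | hc0
  · exact hc0.trans_le (ndRearr_nonneg s₂)
  · rw [lt_ndRearr_iff hθ (hs.trans hs₂) hc0] at hc
    rw [lt_ndRearr_iff hθ hs₂ hc0]
    linarith

theorem ndRearr_self (hL : 0 < L) (hθ : MapsTo θ (Icc 0 L) (Icc 0 M))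
    (hcont : ContinuousWithinAt θ (Icc 0 L) L) (hθL : θ L = M) : ndRearr L θ L = M := by
  refine le_antisymm (ndRearr_le hL.le hθ le_rfl) (le_of_forall_lt fun c hc => ?_)
  rcases lt_or_ge c 0 with hc0 | hc0
  · exact hc0.trans_le (ndRearr_nonneg L)
  · rw [lt_ndRearr_iff hθ le_rfl hc0, sub_self]
    exact ENNReal.toReal_pos (volume_sep_Icc_pos hL hcont (hθL ▸ hc)).ne'
      (measure_ne_top_of_subset (sep_subset _ _) measure_Icc_lt_top.ne)

theorem aemeasurable_ndRearr (hθ : MapsTo θ (Icc 0 L) (Icc 0 M)) :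
    AEMeasurable (ndRearr L θ) (volume.restrict (Icc 0 L)) :=
  aemeasurable_restrict_of_monotoneOn measurableSet_Icc
    ((monotoneOn_ndRearr hθ).mono fun _ hs => hs.2)

/-- `{ndRearr L θ > c}` is the terminal subinterval of `[0, L]` whose length is the measure of
`{θ > c}`. -/
theorem volume_lt_ndRearr (hL : 0 ≤ L) (hθ : MapsTo θ (Icc 0 L) (Icc 0 M)) (c : ℝ) :
    volume {s ∈ Icc 0 L | c < ndRearr L θ s} = volume {t ∈ Icc 0 L | c < θ t} := by
  rcases lt_or_ge c 0 with hc0 | hc0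
  · have h₁ : {s ∈ Icc 0 L | c < ndRearr L θ s} = Icc 0 L :=
      sep_eq_self_iff_mem_true.2 fun s _ => hc0.trans_le (ndRearr_nonneg s)
    have h₂ : {t ∈ Icc 0 L | c < θ t} = Icc 0 L :=
      sep_eq_self_iff_mem_true.2 fun t ht => hc0.trans_le (hθ ht).1
    rw [h₁, h₂]
  set n := (volume {t ∈ Icc 0 L | c < θ t}).toReal
  have hn : n ≤ L := toReal_volume_sep_Icc_le hL _
  have hIoc : {s ∈ Icc 0 L | c < ndRearr L θ s} = Ioc (L - n) L := by
    ext s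
    simp only [mem_ofPred_eq, mem_Icc, mem_Ioc]
    constructor
    · rintro ⟨⟨-, hsL⟩, hs⟩
      exact ⟨by linarith [(lt_ndRearr_iff hθ hsL hc0).1 hs], hsL⟩
    · rintro ⟨hs, hsL⟩
      exact ⟨⟨by linarith, hsL⟩, (lt_ndRearr_iff hθ hsL hc0).2 (by linarith)⟩
  rw [hIoc, Real.volume_Ioc, sub_sub_cancel, ENNReal.ofReal_toReal
    (measure_ne_top_of_subset (sep_subset _ _) measure_Icc_lt_top.ne)]

theorem map_ndRearr (hL : 0 ≤ L) (hθm : AEMeasurable θ (volume.restrict (Icc 0 L)))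
    (hθ : MapsTo θ (Icc 0 L) (Icc 0 M)) :
    (volume.restrict (Icc 0 L)).map (ndRearr L θ) = (volume.restrict (Icc 0 L)).map θ := by
  have hm := aemeasurable_ndRearr hθ
  refine Measure.ext_of_Ioi ?_ fun c => ?_
  · rw [Measure.map_apply_of_aemeasurable hm MeasurableSet.univ,
      Measure.map_apply_of_aemeasurable hθm MeasurableSet.univ]
    rfl
  · rw [Measure.map_apply_of_aemeasurable hm measurableSet_Ioi,
      Measure.map_apply_of_aemeasurable hθm measurableSet_Ioi,
      Measure.restrict_apply' measurableSet_Icc, Measure.restrict_apply' measurableSet_Icc,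
      inter_comm, inter_comm _ (Icc 0 L)]
    exact volume_lt_ndRearr hL hθ c

theorem integral_comp_ndRearr (hL : 0 ≤ L) (hθm : AEMeasurable θ (volume.restrict (Icc 0 L)))
    (hθ : MapsTo θ (Icc 0 L) (Icc 0 M)) {f : ℝ → ℝ} (hf : Continuous f) :
    ∫ t in 0..L, f (ndRearr L θ t) = ∫ t in 0..L, f (θ t) := by
  have hm := aemeasurable_ndRearr hθ
  simp only [integral_of_le hL, ← integral_Icc_eq_integral_Ioc]
  rw [← integral_map hm hf.aestronglyMeasurable, ← integral_map hθm hf.aestronglyMeasurable,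
    map_ndRearr hL hθm hθ]

end Rearrangement

theorem AntitoneOn.integral_pos_of_integral_eq_zero {f : ℝ → ℝ} {a b s : ℝ}
    (hf : AntitoneOn f (Icc a b)) (hint : ∫ t in a..b, f t = 0)
    (habs : 0 < ∫ t in a..b, |f t|) (hs : s ∈ Ioo a b) : 0 < ∫ t in a..s, f t := by
  obtain ⟨has, hsb⟩ := hs
  have hsIcc : s ∈ Icc a b := ⟨has.le, hsb.le⟩
  have hi₁ : IntervalIntegrable f volume a s :=
    (hf.mono (uIcc_of_le has.le ▸ Icc_subset_Icc_right hsb.le)).intervalIntegrable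
  have hi₂ : IntervalIntegrable f volume s b :=
    (hf.mono (uIcc_of_le hsb.le ▸ Icc_subset_Icc_left has.le)).intervalIntegrable
  have hlow : (s - a) * f s ≤ ∫ t in a..s, f t := by
    simpa only [intervalIntegral.integral_const, smul_eq_mul] using integral_mono_on has.le
      intervalIntegrable_const hi₁ fun t ht => hf ⟨ht.1, ht.2.trans hsb.le⟩ hsIcc ht.2
  have hup : ∫ t in s..b, f t ≤ (b - s) * f s := by
    simpa only [intervalIntegral.integral_const, smul_eq_mul] using integral_mono_on hsb.le
      hi₂ intervalIntegrable_const fun t ht => hf hsIcc ⟨has.le.trans ht.1, ht.2⟩ ht.1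
  have hsplit : (∫ t in a..s, f t) + ∫ t in s..b, f t = 0 := by
    rw [integral_add_adjacent_intervals hi₁ hi₂, hint]
  refine lt_of_not_ge fun hle => habs.ne' ?_
  -- the partial integrals force `f s = 0`, so `f` changes sign exactly at `s`
  have hfs : f s = 0 := by nlinarith [sub_pos.2 has, sub_pos.2 hsb]
  have h₁ : ∫ t in a..s, |f t| = ∫ t in a..s, f t :=
    integral_congr fun t ht => by
      rw [uIcc_of_le has.le] at ht
      exact abs_of_nonneg (hfs ▸ hf ⟨ht.1, ht.2.trans hsb.le⟩ hsIcc ht.2)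
  have h₂ : ∫ t in s..b, |f t| = -∫ t in s..b, f t := by
    rw [← intervalIntegral.integral_neg]
    refine integral_congr fun t ht => ?_
    rw [uIcc_of_le hsb.le] at ht
    exact abs_of_nonpos (hfs ▸ hf hsIcc ⟨has.le.trans ht.1, ht.2⟩ ht.1)
  rw [← integral_add_adjacent_intervals hi₁.abs hi₂.abs, h₁, h₂]
  nlinarith [sub_pos.2 has, sub_pos.2 hsb]

theorem stmt_9_general (L : ℝ) (hL : 0 < L) (θ : ℝ → ℝ) (K : NNReal)
    (hθ : LipschitzOnWith K θ (Set.Icc 0 L))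
    (hrange : ∀ s ∈ Set.Icc 0 L, θ s ∈ Set.Icc (0:ℝ) Real.pi)
    (h0 : θ 0 = 0) (hLval : θ L = Real.pi)
    (hclosed : (∫ t in (0:ℝ)..L, Real.cos (θ t)) = 0) :
    ndRearr L θ 0 = 0 ∧ ndRearr L θ L = Real.pi ∧
    (∫ t in (0:ℝ)..L, Real.cos (ndRearr L θ t)) = 0 ∧
    (0 < ∫ t in (0:ℝ)..L, Real.sin (ndRearr L θ t)) ∧
    ∀ s ∈ Set.Ioo (0:ℝ) L, 0 < ∫ t in (0:ℝ)..s, Real.cos (ndRearr L θ t) := by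
  have hcont : ContinuousOn θ (Icc 0 L) := hθ.continuousOn
  have hmaps : MapsTo θ (Icc 0 L) (Icc 0 π) := fun t ht => hrange t ht
  have transfer : ∀ f : ℝ → ℝ, Continuous f →
      ∫ t in 0..L, f (ndRearr L θ t) = ∫ t in 0..L, f (θ t) := fun f hf =>
    integral_comp_ndRearr hL.le (hcont.aemeasurable measurableSet_Icc) hmaps hf
  have hcos : ∫ t in 0..L, cos (ndRearr L θ t) = 0 := (transfer cos continuous_cos).trans hclosed
  obtain ⟨t₀, ht₀, hθt₀⟩ : π / 2 ∈ θ '' Icc 0 L :=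
    intermediate_value_Icc hL.le hcont ⟨by linarith [pi_pos], by linarith [pi_pos]⟩
  refine ⟨ndRearr_zero hL.le, ndRearr_self hL hmaps (hcont L (right_mem_Icc.2 hL.le)) hLval,
    hcos, ?_, fun s hs => ?_⟩
  · rw [transfer sin continuous_sin]
    refine integral_pos hL (continuous_sin.comp_continuousOn hcont) (fun t ht => ?_)
      ⟨t₀, ht₀, by simp [hθt₀]⟩
    exact sin_nonneg_of_nonneg_of_le_pi (hmaps (Ioc_subset_Icc_self ht)).1
      (hmaps (Ioc_subset_Icc_self ht)).2
  · have hanti : AntitoneOn (fun t => cos (ndRearr L θ t)) (Icc 0 L) :=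
      antitoneOn_cos.comp_MonotoneOn ((monotoneOn_ndRearr hmaps).mono fun _ ht => ht.2)
        fun t ht => ⟨ndRearr_nonneg t, ndRearr_le hL.le hmaps ht.2⟩
    refine hanti.integral_pos_of_integral_eq_zero hcos ?_ hs
    rw [transfer (fun x => |cos x|) continuous_cos.abs]
    exact integral_pos hL (continuous_cos.abs.comp_continuousOn hcont)
      (fun _ _ => abs_nonneg _) ⟨0, left_mem_Icc.2 hL.le, by simp [h0]⟩

theorem stmt_9 (L : ℝ) (hL : 0 < L) (θ : ℝ → ℝ) (K : NNReal)
    (hθ : LipschitzOnWith K θ (Set.Icc 0 L))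
    (hrange : ∀ s ∈ Set.Icc 0 L, θ s ∈ Set.Icc (0:ℝ) Real.pi)
    (h0 : θ 0 = 0) (hLval : θ L = Real.pi)
    (hclosed : (∫ t in (0:ℝ)..L, Real.cos (θ t)) = 0)
    (hxpos : ∀ s ∈ Set.Ioo (0:ℝ) L, 0 < ∫ t in (0:ℝ)..s, Real.cos (θ t)) :
    ndRearr L θ 0 = 0 ∧ ndRearr L θ L = Real.pi ∧
    (∫ t in (0:ℝ)..L, Real.cos (ndRearr L θ t)) = 0 ∧
    (0 < ∫ t in (0:ℝ)..L, Real.sin (ndRearr L θ t)) ∧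
    ∀ s ∈ Set.Ioo (0:ℝ) L, 0 < ∫ t in (0:ℝ)..s, Real.cos (ndRearr L θ t) :=
  stmt_9_general L hL θ K hθ hrange h0 hLval hclosed
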